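/- Let E be an expression with normalization level k and weight w > 1. Then α_k is defined at E, and the expression α_k(E) either has normalization level strictly greater than k, or has normalization level equal to k and weight strictly less than w. -/

import Mathlib

/-- Binary trees: expressions in a category with multiplication. -/
inductive BT : Type
  | leaf : BT
  | node : BT → BT → BT
deriving DecidableEq

namespace BT

/-- number of leaves (variables) of an expression -/
def leaves : BT → ℕ
  | leaf => 1
  | node l r => leaves l + leaves r

/-- `stab i t` is `t` right-stabilized `i` times: `(t ⊗_i I)`. -/
def stab : ℕ → BT → BT
  | 0, t => t
  | n+1, t => node (stab n t) leaf

/-- semi-normalized: of the form `(F ⊗ I)` -/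
def IsSemi (t : BT) : Prop := ∃ f, t = node f leaf

/-- fully normalized: a left comb, i.e. an iterated right stabilization of `I` -/
def IsComb (t : BT) : Prop := ∃ n, t = stab n leaf

/-- The move `α_i`: `α_0` reassociates `(H ⊗ (K ⊗ L))` to `((H ⊗ K) ⊗ L)` at the
root, and `α_{i+1} (N ⊗ I) = (α_i N) ⊗ I`. -/
inductive Alpha : ℕ → BT → BT → Prop
  | base (H K L : BT) : Alpha 0 (node H (node K L)) (node (node H K) L)
  | step {i N N'} : Alpha i N N' → Alpha (i+1) (node N leaf) (node N' leaf)

end BT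

/-- `E` has normalization level `k`: either `E` is fully normalized with `k`
leaves, or `E = (N ⊗_k I)` with `N` not semi-normalized. -/
def BT.NormLevel (E : BT) (k : ℕ) : Prop :=
  (BT.IsComb E ∧ k = E.leaves) ∨
    (¬ BT.IsComb E ∧ ∃ N, ¬ BT.IsSemi N ∧ E = BT.stab k N)

/-- `E` has normalization level `k` and weight `w > 1`:
`E = ((F ⊗ G) ⊗_k I)` with `(F ⊗ G)` not semi-normalized and `w` the number of
leaves of `G`. -/
def BT.LevelWeight (E : BT) (k w : ℕ) : Prop :=
  ∃ F G, ¬ BT.IsSemi (BT.node F G) ∧ E = BT.stab k (BT.node F G) ∧ w = G.leaves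

/-!
Write `E = ((F ⊗ (K ⊗ L)) ⊗_k I)`; the weight exceeds `1` exactly when the right factor
is a product. Then `α_k E = (((F ⊗ K) ⊗ L) ⊗_k I)`. If `L = I`, this is
`((F ⊗ K) ⊗_{k+1} I)`, whose normalization level is at least `k + 1`. Otherwise
`((F ⊗ K) ⊗ L)` is not semi-normalized, so the level stays `k` and the weight drops from
`|K| + |L|` to `|L|`.
-/

namespace BT

lemma leaves_pos : ∀ t : BT, 0 < t.leaves
  | leaf => Nat.one_pos
  | node l _ => Nat.add_pos_left (leaves_pos l) _

lemma leaves_stab (n : ℕ) (t : BT) : (stab n t).leaves = t.leaves + n := by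
  induction n with
  | zero => rfl
  | succ n ih => simp only [stab, leaves, ih]; omega

lemma stab_succ' (m : ℕ) (t : BT) : stab (m + 1) t = stab m (node t leaf) := by
  induction m with
  | zero => rfl
  | succ m ih => rw [stab, ih, stab]

lemma not_isSemi_node_node (a x y : BT) : ¬ IsSemi (node a (node x y)) := by
  simp [IsSemi]

lemma IsComb.of_stab {m : ℕ} {t : BT} (h : IsComb (stab m t)) : IsComb t := by
  induction m with
  | zero => exact h
  | succ m ih =>
    obtain ⟨_ | j, hj⟩ := h
    · cases hj
    · exact ih ⟨j, by injection hj⟩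

lemma not_isComb_node_node (a x y : BT) : ¬ IsComb (node a (node x y)) := by
  rintro ⟨_ | n, h⟩ <;> cases h

lemma Alpha.stab {i : ℕ} {N N' : BT} (h : Alpha i N N') (k : ℕ) :
    Alpha (k + i) (BT.stab k N) (BT.stab k N') := by
  induction k with
  | zero => rw [Nat.zero_add]; exact h
  | succ k ih => rw [Nat.succ_add]; exact ih.step

lemma levelWeight_stab_node_node (k : ℕ) (F x y : BT) :
    LevelWeight (stab k (node F (node x y))) k (node x y).leaves :=
  ⟨F, node x y, not_isSemi_node_node F x y, rfl, rfl⟩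

lemma exists_normLevel_stab_ge (t : BT) (m : ℕ) : ∃ k, m ≤ k ∧ NormLevel (stab m t) k := by
  induction t generalizing m with
  | leaf => exact ⟨1 + m, by omega, Or.inl ⟨⟨m, rfl⟩, by simp [leaves_stab, leaves]⟩⟩
  | node a b iha _ =>
    cases b with
    | leaf =>
      obtain ⟨k, hk, h⟩ := iha (m + 1)
      exact ⟨k, by omega, by rwa [← stab_succ']⟩
    | node x y =>
      refine ⟨m, le_rfl, Or.inr ⟨fun h => not_isComb_node_node a x y h.of_stab, ?_⟩⟩
      exact ⟨node a (node x y), not_isSemi_node_node a x y, rfl⟩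

end BT

/-- If `E` has normalization level `k` and weight `w > 1`, then `α_k` is
defined at `E`, and the target has either larger normalization level, or the
same normalization level and smaller weight. -/
theorem alpha_at_level (k w : ℕ) (E : BT)
    (hE : BT.LevelWeight E k w) (hw : 1 < w) :
    ∃ F, BT.Alpha k E F ∧
      ((∃ k', BT.NormLevel F k' ∧ k < k') ∨
        (∃ w', BT.LevelWeight F k w' ∧ w' < w)) := by
  obtain ⟨F, G, -, rfl, rfl⟩ := hE
  cases G with
  | leaf => exact absurd hw (lt_irrefl 1)
  | node K L =>
    refine ⟨BT.stab k (.node (.node F K) L), (BT.Alpha.base F K L).stab k, ?_⟩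
    cases L with
    | leaf =>
      obtain ⟨k', hk', h⟩ := BT.exists_normLevel_stab_ge (.node F K) (k + 1)
      exact Or.inl ⟨k', by rwa [BT.stab_succ'] at h, hk'⟩
    | node x y =>
      refine Or.inr ⟨_, BT.levelWeight_stab_node_node k (.node F K) x y, ?_⟩
      exact Nat.lt_add_of_pos_left (BT.leaves_pos K)
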